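/- arXiv:1501.07449 — 3 statements merged into one kernel-verified Lean document; each statement's English description precedes it below -/
import Mathlib

section
/- Let K be a compact topological space and A, B ⊂ K be closed, disjoint subsets such that no connected subset S ⊂ K satisfies both S ∩ A ≠ ∅ and S ∩ B ≠ ∅. Then there exist compact sets K_A, K_B ⊂ K with A ⊂ K_A, B ⊂ K_B, K_A ∩ K_B = ∅, and K_A ∪ K_B = K. -/
open Set

/-- In a compact Hausdorff space, if the connected component of `a` is disjoint from a
closed set `B`, then there is a clopen set containing `a` disjoint from `B`. -/
lemma exists_clopen_disjoint
    {K : Type*} [TopologicalSpace K] [CompactSpace K] [T2Space K]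
    {B : Set K} (hB : IsClosed B) (a : K) (hcomp : connectedComponent a ∩ B = ∅) :
    ∃ U : Set K, IsClopen U ∧ a ∈ U ∧ U ∩ B = ∅ := by
  have key := connectedComponent_eq_iInter_isClopen a
  have h2 : B ∩ ⋂ (s : { s : Set K // IsClopen s ∧ a ∈ s }), (s : Set K) = ∅ := by
    rw [← key, Set.inter_comm]; exact hcomp
  obtain ⟨t, ht⟩ := hB.isCompact.elim_finite_subfamily_closed
    (fun s : { s : Set K // IsClopen s ∧ a ∈ s } => (s : Set K))
    (fun s => s.2.1.1) h2
  refine ⟨⋂ i ∈ t, (i : Set K), isClopen_biInter_finset fun i _ => i.2.1,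
    Set.mem_iInter₂.2 fun i _ => i.2.2, ?_⟩
  rw [Set.inter_comm]; exact ht

/-- separation lemma. Let `K` be a compact (Hausdorff) space and
`A, B ⊆ K` closed disjoint subsets such that no connected subset `S ⊆ K` meets both
`A` and `B`. Then there exist compact sets `K_A, K_B ⊆ K` with `A ⊆ K_A`, `B ⊆ K_B`,
`K_A ∩ K_B = ∅` and `K_A ∪ K_B = K`. -/
theorem separation_lemma
    {K : Type*} [TopologicalSpace K] [CompactSpace K] [T2Space K]
    (A B : Set K) (hA : IsClosed A) (hB : IsClosed B) (hAB : Disjoint A B)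
    (h : ∀ S : Set K, IsConnected S → ¬(S ∩ A ≠ ∅ ∧ S ∩ B ≠ ∅)) :
    ∃ KA KB : Set K, IsCompact KA ∧ IsCompact KB ∧ A ⊆ KA ∧ B ⊆ KB ∧
      KA ∩ KB = ∅ ∧ KA ∪ KB = Set.univ := by
  -- for each a ∈ A, a clopen set containing a and disjoint from B
  have key : ∀ a ∈ A, ∃ U : Set K, IsClopen U ∧ a ∈ U ∧ U ∩ B = ∅ := by
    intro a ha
    apply exists_clopen_disjoint hB
    by_contra hne
    exact h (connectedComponent a) (isConnected_connectedComponent)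
      ⟨fun he => (Set.eq_empty_iff_forall_notMem.1 he a
        ⟨mem_connectedComponent, ha⟩), hne⟩
  choose! U hUclopen hUmem hUB using key
  -- A is compact, cover it by the U a
  have hAcomp : IsCompact A := hA.isCompact
  obtain ⟨t, htA, htfin, hcov⟩ := hAcomp.elim_finite_subcover_image
    (fun a (ha : a ∈ A) => (hUclopen a ha).2) (fun x hx => Set.mem_biUnion hx (hUmem x hx))
  set KA : Set K := ⋃ a ∈ t, U a with hKA
  have hKAclopen : IsClopen KA := by
    apply Set.Finite.isClopen_biUnion htfin
    exact fun a ha => hUclopen a (htA ha)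
  refine ⟨KA, KAᶜ, hKAclopen.isClosed.isCompact, hKAclopen.compl.isClosed.isCompact,
    hcov, ?_, by simp, by simp⟩
  intro b hb
  simp only [Set.mem_compl_iff, hKA, Set.mem_iUnion]
  rintro ⟨a, ha, hbU⟩
  exact Set.eq_empty_iff_forall_notMem.1 (hUB a (htA ha)) b ⟨hbU, hb⟩
end

section
/- Let G be a compact Lie group acting orthogonally on V, let Ω ⊂ V be open and G-invariant, and suppose all points of Ω have the same orbit type (H), i.e., Ω = Ω_{(H)}. Let φ ∈ C²_G(Ω, ℝ) and v₀ ∈ Ω a critical point of φ. Then with respect to the decomposition T_{v₀}Ω = T_{v₀}G(v₀) ⊕ (T_{v₀}Ω ⊖ T_{v₀}G(v₀)), the Hessian has the block form ∇²φ(v₀) = diag(0, B(v₀)); in particular the block C(v₀) is absent and ker ∇²φ(v₀) ⊇ T_{v₀}G(v₀). -/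
/-- The set of tangent vectors at `v₀` to the orbit `G(v₀)`, described as derivatives
at `0` of curves with values in the orbit passing through `v₀` at time `0`. -/
def orbitTangentSet {G : Type*} [Group G] {n : ℕ}
    (ρ : G →* (EuclideanSpace ℝ (Fin n) ≃ₗᵢ[ℝ] EuclideanSpace ℝ (Fin n)))
    (v₀ : EuclideanSpace ℝ (Fin n)) : Set (EuclideanSpace ℝ (Fin n)) :=
  {d | ∃ c : ℝ → EuclideanSpace ℝ (Fin n),
        c 0 = v₀ ∧ (∀ t, ∃ g : G, c t = ρ g v₀) ∧ HasDerivAt c d 0}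

/-!
Differentiating the invariance `φ ∘ ρ g = φ` shows that the gradient vanishes on the whole orbit
of the critical point `v₀`; differentiating `∇φ ∘ c = 0` along a curve `c` in the orbit then puts
every orbit tangent vector in the kernel of the Hessian. The Hessian is symmetric (Schwarz), so
its range is orthogonal to its kernel and in particular to the orbit tangent space.
-/

open InnerProductSpace Topology

section Calculus

variable {𝕜 E F : Type*} [NontriviallyNormedField 𝕜]
  [NormedAddCommGroup E] [NormedSpace 𝕜 E] [NormedAddCommGroup F] [NormedSpace 𝕜 F]

theorem fderiv_eq_zero_at_map_of_comp_eq {f : E → F} (L : E ≃L[𝕜] E) (hf : f ∘ L = f) {x : E}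
    (hx : fderiv 𝕜 f x = 0) : fderiv 𝕜 f (L x) = 0 := by
  have hcomp : fderiv 𝕜 f x = (fderiv 𝕜 f (L x)).comp (L : E →L[𝕜] E) := by
    rw [← L.comp_right_fderiv, hf]
  ext y
  simpa [hx] using congr($hcomp (L.symm y)).symm

theorem fderiv_apply_eq_zero_of_comp_eventually_eq_zero {f : E → F} {c : 𝕜 → E} {d : E} {t₀ : 𝕜}
    (hf : DifferentiableAt 𝕜 f (c t₀)) (hc : HasDerivAt c d t₀)
    (hzero : ∀ᶠ t in 𝓝 t₀, f (c t) = 0) : fderiv 𝕜 f (c t₀) d = 0 :=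
  (hf.hasFDerivAt.comp_hasDerivAt t₀ hc).unique
    ((hasDerivAt_const t₀ (0 : F)).congr_of_eventuallyEq hzero)

end Calculus

section Gradient

variable {F : Type*} [NormedAddCommGroup F] [InnerProductSpace ℝ F] [CompleteSpace F]

theorem gradient_eq_zero_at_map_of_comp_eq {f : F → ℝ} (L : F ≃L[ℝ] F) (hf : f ∘ L = f) {x : F}
    (hx : gradient f x = 0) : gradient f (L x) = 0 := by
  simp only [gradient, LinearIsometryEquiv.map_eq_zero_iff] at hx ⊢
  exact fderiv_eq_zero_at_map_of_comp_eq L hf hx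

theorem fderiv_gradient_apply (f : F → ℝ) (x v : F) :
    fderiv ℝ (gradient f) x v = (toDual ℝ F).symm (fderiv ℝ (fderiv ℝ f) x v) := by
  -- `toDual ℝ F` is typed as conjugate-linear; over `ℝ` it is linear by `rfl`.
  let e : StrongDual ℝ F ≃ₗᵢ[ℝ] F := (toDual ℝ F).symm
  exact congr($(e.comp_fderiv (f := fderiv ℝ f) (x := x)) v)

theorem ContDiffAt.differentiableAt_gradient {f : F → ℝ} {x : F} (hf : ContDiffAt ℝ 2 f x) :
    DifferentiableAt ℝ (gradient f) x := by
  let e : StrongDual ℝ F ≃ₗᵢ[ℝ] F := (toDual ℝ F).symm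
  exact e.comp_differentiableAt_iff.2 <|
    (hf.fderiv_right (m := 1) le_rfl).differentiableAt one_ne_zero

theorem ContDiffAt.isSymmetric_fderiv_gradient {f : F → ℝ} {x : F} (hf : ContDiffAt ℝ 2 f x) :
    (fderiv ℝ (gradient f) x : F →ₗ[ℝ] F).IsSymmetric := by
  intro v w
  have hsymm := hf.isSymmSndFDerivAt (by simp [minSmoothness_of_isRCLikeNormedField])
  simp only [ContinuousLinearMap.coe_coe]
  rw [fderiv_gradient_apply, fderiv_gradient_apply, ← real_inner_comm v, toDual_symm_apply,
    toDual_symm_apply, hsymm.eq]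

end Gradient

theorem LinearMap.IsSymmetric.apply_mem_orthogonal_of_le_ker {𝕜 E : Type*} [RCLike 𝕜]
    [NormedAddCommGroup E] [InnerProductSpace 𝕜 E] {T : E →ₗ[𝕜] E} (hT : T.IsSymmetric)
    {K : Submodule 𝕜 E} (hK : K ≤ LinearMap.ker T) (w : E) : T w ∈ Kᗮ := by
  rw [← hT.orthogonal_range] at hK
  exact Submodule.orthogonal_le hK
    ((LinearMap.range T).le_orthogonal_orthogonal (LinearMap.mem_range_self T w))

theorem hessian_block_single_orbit_type_general
    {G : Type*} [Group G]
    {n : ℕ}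
    (ρ : G →* (EuclideanSpace ℝ (Fin n) ≃ₗᵢ[ℝ] EuclideanSpace ℝ (Fin n)))
    (φ : EuclideanSpace ℝ (Fin n) → ℝ) (hφ : ContDiff ℝ 2 φ)
    (hinv : ∀ (g : G) v, φ (ρ g v) = φ v)
    (v₀ : EuclideanSpace ℝ (Fin n)) (hcrit : gradient φ v₀ = 0) :
    (∀ d ∈ orbitTangentSet ρ v₀, fderiv ℝ (gradient φ) v₀ d = 0) ∧
    (∀ d ∈ Submodule.span ℝ (orbitTangentSet ρ v₀),
      d ∈ LinearMap.ker (fderiv ℝ (gradient φ) v₀ :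
        EuclideanSpace ℝ (Fin n) →ₗ[ℝ] EuclideanSpace ℝ (Fin n))) ∧
    (∀ w ∈ (Submodule.span ℝ (orbitTangentSet ρ v₀))ᗮ,
      fderiv ℝ (gradient φ) v₀ w ∈ (Submodule.span ℝ (orbitTangentSet ρ v₀))ᗮ) := by
  have hgrad_orbit : ∀ g : G, gradient φ (ρ g v₀) = 0 := fun g =>
    gradient_eq_zero_at_map_of_comp_eq (ρ g).toContinuousLinearEquiv (funext (hinv g)) hcrit
  have htangent : ∀ d ∈ orbitTangentSet ρ v₀, fderiv ℝ (gradient φ) v₀ d = 0 := by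
    rintro d ⟨c, rfl, horbit, hc⟩
    refine fderiv_apply_eq_zero_of_comp_eventually_eq_zero
      hφ.contDiffAt.differentiableAt_gradient hc (Filter.Eventually.of_forall fun t => ?_)
    obtain ⟨g, hg⟩ := horbit t
    rw [hg, hgrad_orbit]
  have hspan : Submodule.span ℝ (orbitTangentSet ρ v₀) ≤
      LinearMap.ker (fderiv ℝ (gradient φ) v₀ :
        EuclideanSpace ℝ (Fin n) →ₗ[ℝ] EuclideanSpace ℝ (Fin n)) :=
    Submodule.span_le.2 fun d hd => htangent d hd
  exact ⟨htangent, hspan, fun w _ =>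
    hφ.contDiffAt.isSymmetric_fderiv_gradient.apply_mem_orthogonal_of_le_ker hspan w⟩

/-- Let `G` be a compact Lie group acting orthogonally on `V = ℝⁿ`,
`Ω ⊆ V` open and `G`-invariant, with all points of `Ω` of the same orbit type `(H)`
(all isotropy groups conjugate to `H`). For `φ ∈ C²_G(Ω, ℝ)` and a critical point
`v₀ ∈ Ω`, with respect to `T_{v₀}Ω = T_{v₀}G(v₀) ⊕ (T_{v₀}Ω ⊖ T_{v₀}G(v₀))` the
Hessian has the block form `diag(0, B(v₀))`: it vanishes on `T_{v₀}G(v₀)` (so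
`ker ∇²φ(v₀) ⊇ T_{v₀}G(v₀)`) and preserves the orthogonal complement; the block
`C(v₀)` is absent. -/
theorem hessian_block_single_orbit_type
    {G : Type*} [Group G] [TopologicalSpace G] [IsTopologicalGroup G] [CompactSpace G]
    {n : ℕ}
    (ρ : G →* (EuclideanSpace ℝ (Fin n) ≃ₗᵢ[ℝ] EuclideanSpace ℝ (Fin n)))
    (hρ : Continuous fun p : G × EuclideanSpace ℝ (Fin n) => ρ p.1 p.2)
    (Ω : Set (EuclideanSpace ℝ (Fin n))) (hΩ : IsOpen Ω)
    (hΩinv : ∀ (g : G), ∀ v ∈ Ω, ρ g v ∈ Ω)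
    (H : Subgroup G)
    (horbtype : ∀ v ∈ Ω, ∃ g : G, ∀ x : G, ρ x v = v ↔ g * x * g⁻¹ ∈ H)
    (φ : EuclideanSpace ℝ (Fin n) → ℝ) (hφ : ContDiff ℝ 2 φ)
    (hinv : ∀ (g : G) v, φ (ρ g v) = φ v)
    (v₀ : EuclideanSpace ℝ (Fin n)) (hv₀ : v₀ ∈ Ω) (hcrit : gradient φ v₀ = 0) :
    (∀ d ∈ orbitTangentSet ρ v₀, fderiv ℝ (gradient φ) v₀ d = 0) ∧
    (∀ d ∈ Submodule.span ℝ (orbitTangentSet ρ v₀),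
      d ∈ LinearMap.ker (fderiv ℝ (gradient φ) v₀ :
        EuclideanSpace ℝ (Fin n) →ₗ[ℝ] EuclideanSpace ℝ (Fin n))) ∧
    (∀ w ∈ (Submodule.span ℝ (orbitTangentSet ρ v₀))ᗮ,
      fderiv ℝ (gradient φ) v₀ w ∈ (Submodule.span ℝ (orbitTangentSet ρ v₀))ᗮ) :=
  hessian_block_single_orbit_type_general ρ φ hφ hinv v₀ hcrit
end

section
/- Let V = ℝ² with the natural SO(2)-action and Ω ⊂ V be open, SO(2)-invariant, bounded, with Ω^{SO(2)} = ∅ (i.e., 0 ∉ Ω). Then for any C¹ SO(2)-invariant function φ : V → ℝ with (∇φ)⁻¹(0) ∩ ∂Ω = ∅, the Brouwer degree deg_B(∇φ, Ω, 0) = 0. -/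
/-!
Rotation invariance of `φ` makes `∇φ x` orthogonal to the rotation velocity `x^⊥`, so the
straight-line homotopy from `∇φ` to `x ↦ x^⊥` has no zeros on `∂Ω` (pair it with `x^⊥`).
Since `0 ∉ Ω` and `∇φ 0 = 0` (`φ` is even), also `0 ∉ closure Ω`; there `x ↦ x^⊥` has no
zeros, so its degree vanishes by additivity with two empty pieces.
-/

open Set

/-- Rotation by angle `s` on the plane `ℝ²` (the natural `SO(2)`-action). -/
noncomputable def rotE (s : ℝ) (v : EuclideanSpace ℝ (Fin 2)) : EuclideanSpace ℝ (Fin 2) :=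
  (WithLp.equiv 2 (Fin 2 → ℝ)).symm
    ![Real.cos s * v 0 - Real.sin s * v 1, Real.sin s * v 0 + Real.cos s * v 1]

theorem degB_eq_zero_of_forall_mem_closure_ne_zero {E : Type*} [NormedAddCommGroup E]
    {degB : (E → E) → Set E → ℤ}
    (hadd : ∀ (f : E → E) (U U₁ U₂ : Set E),
      IsOpen U → Bornology.IsBounded U → IsOpen U₁ → IsOpen U₂ →
      U₁ ⊆ U → U₂ ⊆ U → Disjoint U₁ U₂ → Continuous f →
      (∀ x ∈ closure U \ (U₁ ∪ U₂), f x ≠ 0) →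
      degB f U = degB f U₁ + degB f U₂)
    {f : E → E} {U : Set E} (hU : IsOpen U) (hUb : Bornology.IsBounded U) (hf : Continuous f)
    (hfU : ∀ x ∈ closure U, f x ≠ 0) : degB f U = 0 := by
  have hempty : degB f ∅ = 0 := by
    have := hadd f ∅ ∅ ∅ isOpen_empty Bornology.isBounded_empty isOpen_empty isOpen_empty
      subset_rfl subset_rfl (disjoint_empty _) hf (by simp)
    omega
  have hsplit := hadd f U ∅ ∅ hU hUb isOpen_empty isOpen_empty (empty_subset U) (empty_subset U)
    (disjoint_empty _) hf (by simpa using hfU)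
  rw [hsplit, hempty, add_zero]

theorem fderiv_zero_eq_zero_of_even {E F : Type*} [NormedAddCommGroup E] [NormedSpace ℝ E]
    [NormedAddCommGroup F] [NormedSpace ℝ F] {f : E → F} (hf : ∀ x, f (-x) = f x) :
    fderiv ℝ f 0 = 0 := by
  by_cases hd : DifferentiableAt ℝ f 0
  · have hd' : HasFDerivAt f (fderiv ℝ f 0) (-0) := by rw [neg_zero]; exact hd.hasFDerivAt
    have hneg : HasFDerivAt (f ∘ Neg.neg) (-fderiv ℝ f 0) 0 := by
      simpa using hd'.comp (0 : E) (hasFDerivAt_id (0 : E)).neg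
    rw [show f ∘ Neg.neg = f from funext hf] at hneg
    have htwo : (2 : ℝ) • fderiv ℝ f 0 = 0 := by
      rw [two_smul]
      nth_rewrite 2 [hd.hasFDerivAt.unique hneg]
      exact add_neg_cancel _
    exact (smul_eq_zero.mp htwo).resolve_left two_ne_zero
  · exact fderiv_zero_of_not_differentiableAt hd

theorem gradient_zero_eq_zero_of_even {F : Type*} [NormedAddCommGroup F]
    [InnerProductSpace ℝ F] [CompleteSpace F] {f : F → ℝ} (hf : ∀ x, f (-x) = f x) :
    gradient f 0 = 0 := by
  rw [gradient, fderiv_zero_eq_zero_of_even hf, map_zero]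

theorem sub_smul_add_smul_ne_zero_of_inner_eq_zero {F : Type*} [NormedAddCommGroup F]
    [InnerProductSpace ℝ F] {g w : F} (hgw : inner ℝ g w = 0) (hg : g ≠ 0) (hw : w ≠ 0)
    (t : ℝ) : (1 - t) • g + t • w ≠ 0 := by
  intro h
  have hpair : inner ℝ ((1 - t) • g + t • w) w = t * ‖w‖ ^ 2 := by
    rw [inner_add_left, real_inner_smul_left, real_inner_smul_left, hgw,
      real_inner_self_eq_norm_sq, mul_zero, zero_add]
  rw [h, inner_zero_left] at hpair
  have ht : t = 0 := by
    rcases mul_eq_zero.mp hpair.symm with ht | hw'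
    · exact ht
    · exact absurd (pow_eq_zero_iff two_ne_zero |>.mp hw') (norm_ne_zero_iff.mpr hw)
  rw [ht, sub_zero, one_smul, zero_smul, add_zero] at h
  exact hg h

noncomputable def perpE (v : EuclideanSpace ℝ (Fin 2)) : EuclideanSpace ℝ (Fin 2) :=
  (WithLp.equiv 2 (Fin 2 → ℝ)).symm ![-(v 1), v 0]

@[fun_prop]
theorem continuous_perpE : Continuous perpE := by
  refine (PiLp.continuous_toLp 2 _).comp (continuous_pi fun i => ?_)
  fin_cases i
  · exact (PiLp.continuous_apply 2 _ 1).neg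
  · exact PiLp.continuous_apply 2 _ 0

theorem norm_perpE (v : EuclideanSpace ℝ (Fin 2)) : ‖perpE v‖ = ‖v‖ := by
  simp [EuclideanSpace.norm_eq, perpE, Fin.sum_univ_two, add_comm]

theorem perpE_ne_zero {v : EuclideanSpace ℝ (Fin 2)} (hv : v ≠ 0) : perpE v ≠ 0 := by
  rwa [← norm_ne_zero_iff, norm_perpE, norm_ne_zero_iff]

theorem rotE_eq_cos_smul_add_sin_smul (s : ℝ) (v : EuclideanSpace ℝ (Fin 2)) :
    rotE s v = Real.cos s • v + Real.sin s • perpE v := by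
  ext i
  fin_cases i <;> simp [rotE, perpE] <;> ring

theorem rotE_zero (v : EuclideanSpace ℝ (Fin 2)) : rotE 0 v = v := by
  simp [rotE_eq_cos_smul_add_sin_smul]

theorem rotE_pi (v : EuclideanSpace ℝ (Fin 2)) : rotE Real.pi v = -v := by
  simp [rotE_eq_cos_smul_add_sin_smul]

theorem rotE_apply_zero (s : ℝ) : rotE s 0 = 0 := by
  ext i; fin_cases i <;> simp [rotE]

theorem hasDerivAt_rotE_zero (v : EuclideanSpace ℝ (Fin 2)) :
    HasDerivAt (fun s => rotE s v) (perpE v) 0 := by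
  have h := ((Real.hasDerivAt_cos 0).smul_const v).add
    ((Real.hasDerivAt_sin 0).smul_const (perpE v))
  simp only [Real.sin_zero, Real.cos_zero, neg_zero, zero_smul, zero_add, one_smul] at h
  rw [funext (rotE_eq_cos_smul_add_sin_smul · v)]
  exact h

theorem inner_gradient_perpE_eq_zero {φ : EuclideanSpace ℝ (Fin 2) → ℝ}
    {v : EuclideanSpace ℝ (Fin 2)} (hφ : DifferentiableAt ℝ φ v)
    (hφinv : ∀ s : ℝ, φ (rotE s v) = φ v) : inner ℝ (gradient φ v) (perpE v) = 0 := by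
  have hφ' : HasFDerivAt φ (fderiv ℝ φ v) (rotE 0 v) := by
    rw [rotE_zero]; exact hφ.hasFDerivAt
  have hderiv := hφ'.comp_hasDerivAt (0 : ℝ) (hasDerivAt_rotE_zero v)
  have hconst : HasDerivAt (fun s => φ (rotE s v)) 0 0 := by
    simpa only [hφinv] using hasDerivAt_const (0 : ℝ) (φ v)
  rw [gradient, InnerProductSpace.toDual_symm_apply]
  exact hderiv.unique hconst

theorem equivariant_gradient_brouwer_degree_zero_general
    (degB : (EuclideanSpace ℝ (Fin 2) → EuclideanSpace ℝ (Fin 2)) →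
      Set (EuclideanSpace ℝ (Fin 2)) → ℤ)
    -- additivity / excision
    (hadd : ∀ (f : EuclideanSpace ℝ (Fin 2) → EuclideanSpace ℝ (Fin 2))
      (U U₁ U₂ : Set (EuclideanSpace ℝ (Fin 2))),
      IsOpen U → Bornology.IsBounded U → IsOpen U₁ → IsOpen U₂ →
      U₁ ⊆ U → U₂ ⊆ U → Disjoint U₁ U₂ → Continuous f →
      (∀ x ∈ closure U \ (U₁ ∪ U₂), f x ≠ 0) →
      degB f U = degB f U₁ + degB f U₂)
    -- homotopy invariance
    (hhom : ∀ (Ht : ℝ → EuclideanSpace ℝ (Fin 2) → EuclideanSpace ℝ (Fin 2))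
      (U : Set (EuclideanSpace ℝ (Fin 2))),
      IsOpen U → Bornology.IsBounded U →
      Continuous (fun p : ℝ × EuclideanSpace ℝ (Fin 2) => Ht p.1 p.2) →
      (∀ t ∈ Icc (0 : ℝ) 1, ∀ x ∈ frontier U, Ht t x ≠ 0) →
      degB (Ht 0) U = degB (Ht 1) U)
    (Ω : Set (EuclideanSpace ℝ (Fin 2)))
    (hΩopen : IsOpen Ω) (hΩbdd : Bornology.IsBounded Ω)
    (hΩfix : {v ∈ Ω | ∀ s : ℝ, rotE s v = v} = ∅)
    (φ : EuclideanSpace ℝ (Fin 2) → ℝ) (hφ : ContDiff ℝ 1 φ)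
    (hφinv : ∀ (s : ℝ) v, φ (rotE s v) = φ v)
    (hadm : ∀ v ∈ frontier Ω, gradient φ v ≠ 0) :
    degB (gradient φ) Ω = 0 := by
  have h0Ω : (0 : EuclideanSpace ℝ (Fin 2)) ∉ Ω := fun h =>
    (eq_empty_iff_forall_notMem.mp hΩfix) 0 ⟨h, rotE_apply_zero⟩
  have h0F : (0 : EuclideanSpace ℝ (Fin 2)) ∉ frontier Ω := fun h =>
    hadm 0 h (gradient_zero_eq_zero_of_even fun v => by rw [← rotE_pi, hφinv])
  have h0cl : (0 : EuclideanSpace ℝ (Fin 2)) ∉ closure Ω := by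
    rw [closure_eq_self_union_frontier]
    exact fun h => h.elim h0Ω h0F
  have hgrad : Continuous (gradient φ) :=
    (InnerProductSpace.toDual ℝ _).symm.continuous.comp (hφ.continuous_fderiv one_ne_zero)
  have hdeg := hhom (fun t v => (1 - t) • gradient φ v + t • perpE v) Ω hΩopen hΩbdd
    (by fun_prop)
    (fun t _ x hx => sub_smul_add_smul_ne_zero_of_inner_eq_zero
      (inner_gradient_perpE_eq_zero (hφ.differentiable one_ne_zero x) (hφinv · x)) (hadm x hx)
      (perpE_ne_zero (ne_of_mem_of_not_mem (frontier_subset_closure hx) h0cl)) t)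
  simp only [sub_zero, one_smul, zero_smul, add_zero, sub_self, zero_add] at hdeg
  rw [hdeg]
  exact degB_eq_zero_of_forall_mem_closure_ne_zero hadd hΩopen hΩbdd continuous_perpE
    fun x hx => perpE_ne_zero (ne_of_mem_of_not_mem hx h0cl)

/-- Let `Ω ⊆ ℝ²` be open, `SO(2)`-invariant, bounded, with no
`SO(2)`-fixed points (`Ω^{SO(2)} = ∅`). Then for any `C¹` `SO(2)`-invariant
`φ : ℝ² → ℝ` with `∇φ` nonvanishing on `∂Ω`, the Brouwer degree
`deg_B(∇φ, Ω, 0)` vanishes. Here `degB` is any map satisfying the Amann–Weiss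
axioms (normalization, additivity, homotopy invariance) which characterize the
Brouwer degree. -/
theorem equivariant_gradient_brouwer_degree_zero
    (degB : (EuclideanSpace ℝ (Fin 2) → EuclideanSpace ℝ (Fin 2)) →
      Set (EuclideanSpace ℝ (Fin 2)) → ℤ)
    -- normalization
    (hnorm : ∀ (U : Set (EuclideanSpace ℝ (Fin 2))), IsOpen U → Bornology.IsBounded U →
      ∀ y ∈ U, degB (fun x => x - y) U = 1)
    -- additivity / excision
    (hadd : ∀ (f : EuclideanSpace ℝ (Fin 2) → EuclideanSpace ℝ (Fin 2))
      (U U₁ U₂ : Set (EuclideanSpace ℝ (Fin 2))),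
      IsOpen U → Bornology.IsBounded U → IsOpen U₁ → IsOpen U₂ →
      U₁ ⊆ U → U₂ ⊆ U → Disjoint U₁ U₂ → Continuous f →
      (∀ x ∈ closure U \ (U₁ ∪ U₂), f x ≠ 0) →
      degB f U = degB f U₁ + degB f U₂)
    -- homotopy invariance
    (hhom : ∀ (Ht : ℝ → EuclideanSpace ℝ (Fin 2) → EuclideanSpace ℝ (Fin 2))
      (U : Set (EuclideanSpace ℝ (Fin 2))),
      IsOpen U → Bornology.IsBounded U →
      Continuous (fun p : ℝ × EuclideanSpace ℝ (Fin 2) => Ht p.1 p.2) →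
      (∀ t ∈ Icc (0 : ℝ) 1, ∀ x ∈ frontier U, Ht t x ≠ 0) →
      degB (Ht 0) U = degB (Ht 1) U)
    (Ω : Set (EuclideanSpace ℝ (Fin 2)))
    (hΩopen : IsOpen Ω) (hΩbdd : Bornology.IsBounded Ω)
    (hΩinv : ∀ (s : ℝ), ∀ v ∈ Ω, rotE s v ∈ Ω)
    (hΩfix : {v ∈ Ω | ∀ s : ℝ, rotE s v = v} = ∅)
    (φ : EuclideanSpace ℝ (Fin 2) → ℝ) (hφ : ContDiff ℝ 1 φ)
    (hφinv : ∀ (s : ℝ) v, φ (rotE s v) = φ v)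
    (hadm : ∀ v ∈ frontier Ω, gradient φ v ≠ 0) :
    degB (gradient φ) Ω = 0 :=
  equivariant_gradient_brouwer_degree_zero_general degB hadd hhom Ω hΩopen hΩbdd hΩfix φ hφ hφinv
    hadm
end
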